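/- arXiv:1901.03700 — 2 statements merged into one kernel-verified Lean document; each statement's English description precedes it below -/
import Mathlib

section
/- Recurrence relation: for every n ≥ 1, B_n^{[m-1]}(x) = (x - 1/(m+1)) B_{n-1}^{[m-1]}(x) - (1/(n(m-1)!)) ∑_{k=0}^{n-2} C(n,k) B_{n-k}^{[m-1]} B_k^{[m-1]}(x). -/
open scoped Nat Real

/-- The partial sum `∑_{l=0}^{m-1} z^l / l!` of the exponential series. -/
noncomputable def expPartialSum (m : ℕ) : PowerSeries ℝ :=
  ∑ l ∈ Finset.range m, PowerSeries.C ((1 : ℝ) / l !) * PowerSeries.X ^ l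

/-- `B : ℕ → ℝ → ℝ` is the family of generalized Bernoulli polynomials of level `m`,
i.e. `z^m e^{xz} / (e^z - ∑_{l=0}^{m-1} z^l/l!) = ∑ B n x * z^n / n!`, stated
multiplicatively. -/
noncomputable def IsGenBernoulli (m : ℕ) (B : ℕ → ℝ → ℝ) : Prop :=
  ∀ x : ℝ,
    (PowerSeries.exp ℝ - expPartialSum m) * PowerSeries.mk (fun n => B n x / n !) =
      PowerSeries.X ^ m * PowerSeries.mk (fun n => x ^ n / n !)

/-!
Write `G = e^z - ∑_{l<m} z^l/l!` and `F_x = ∑ B_n(x) z^n/n!`, so that `G F_x = z^m e^{xz}`.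
Since `G' = G + z^(m-1)/(m-1)!`, differentiating this identity and eliminating `z^m` with
`G F_0 = z^m` gives `z F_x' = m F_x + (x - 1) z F_x - F_0 F_x / (m-1)!`. Comparing coefficients
of `z^n` yields a binomial convolution whose two top terms involve `B_0(0) = m!` and
`B_1(0) = -m!/(m+1)`; these are read off from `G = z^m (1/m! + z/(m+1)! + ⋯)`.
-/

open PowerSeries Finset

section ExponentialGeneratingFunction

variable {K : Type*} [Field K]

noncomputable def egf (a : ℕ → K) : K⟦X⟧ :=
  mk fun n => a n / n !

@[simp]
theorem coeff_egf (a : ℕ → K) (n : ℕ) : coeff n (egf a) = a n / n ! :=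
  coeff_mk _ _

theorem egf_zero_pow : egf (fun n => (0 : K) ^ n) = 1 := by
  ext n
  cases n <;> simp

variable [CharZero K]

theorem egf_mul (a b : ℕ → K) :
    egf a * egf b = egf fun n => ∑ k ∈ range (n + 1), (n.choose k : K) * a (n - k) * b k := by
  ext n
  rw [mul_comm, coeff_mul, Nat.sum_antidiagonal_eq_sum_range_succ_mk, coeff_egf, sum_div]
  refine sum_congr rfl fun k hk => ?_
  have hkn : k ≤ n := Nat.lt_succ_iff.mp (mem_range.mp hk)
  have hn : (n ! : K) ≠ 0 := Nat.cast_ne_zero.mpr n.factorial_ne_zero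
  dsimp only
  rw [coeff_egf, coeff_egf, Nat.cast_choose K hkn]
  field_simp

theorem derivative_egf (a : ℕ → K) : d⁄dX K (egf a) = egf fun n => a (n + 1) := by
  ext n
  rw [coeff_derivative, coeff_egf, coeff_egf, Nat.factorial_succ]
  push_cast
  field_simp

theorem derivative_egf_pow (x : K) : d⁄dX K (egf (x ^ ·)) = C x * egf (x ^ ·) := by
  ext n
  simp [derivative_egf, pow_succ, mul_div_assoc, mul_comm]

theorem X_mul_egf (a : ℕ → K) : X * egf a = egf fun n => n * a (n - 1) := by
  ext (_ | n)
  · simp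
  · rw [coeff_succ_X_mul, coeff_egf, coeff_egf, Nat.factorial_succ]
    push_cast
    field_simp

theorem X_mul_derivative_egf (a : ℕ → K) : X * d⁄dX K (egf a) = egf fun n => n * a n := by
  rw [derivative_egf, X_mul_egf]
  congr 1
  ext (_ | n) <;> simp

end ExponentialGeneratingFunction

theorem coeff_expPartialSum (m n : ℕ) :
    coeff n (expPartialSum m) = if n < m then (1 : ℝ) / n ! else 0 := by
  simp [expPartialSum, map_sum, coeff_C_mul, coeff_X_pow]

theorem expPartialSum_succ (k : ℕ) :
    expPartialSum (k + 1) = expPartialSum k + C ((1 : ℝ) / k !) * X ^ k :=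
  sum_range_succ _ _

theorem derivative_expPartialSum_succ (k : ℕ) :
    d⁄dX ℝ (expPartialSum (k + 1)) = expPartialSum k := by
  ext n
  rw [coeff_derivative, coeff_expPartialSum, coeff_expPartialSum]
  by_cases hn : n < k
  · rw [if_pos (by omega), if_pos hn, Nat.factorial_succ]
    push_cast
    field_simp
  · rw [if_neg (by omega), if_neg hn, zero_mul]

theorem derivative_exp_sub_expPartialSum {m : ℕ} (hm : 0 < m) :
    d⁄dX ℝ (exp ℝ - expPartialSum m) =
      exp ℝ - expPartialSum m + C ((1 : ℝ) / (m - 1)!) * X ^ (m - 1) := by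
  obtain ⟨k, rfl⟩ := Nat.exists_eq_add_of_lt hm
  rw [map_sub, derivative_exp, Nat.zero_add, derivative_expPartialSum_succ, expPartialSum_succ,
    Nat.add_sub_cancel]
  ring

noncomputable def expTail (m : ℕ) : ℝ⟦X⟧ :=
  mk fun n => (1 : ℝ) / (m + n)!

theorem exp_sub_expPartialSum_eq_X_pow_mul_expTail (m : ℕ) :
    exp ℝ - expPartialSum m = X ^ m * expTail m := by
  ext n
  rw [map_sub, coeff_exp, coeff_expPartialSum, coeff_X_pow_mul', expTail]
  by_cases hn : n < m
  · rw [if_pos hn, if_neg (by omega)]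
    simp
  · rw [if_neg hn, if_pos (by omega), coeff_mk, Nat.add_sub_cancel' (by omega)]
    simp

theorem exp_sub_expPartialSum_ne_zero (m : ℕ) : exp ℝ - expPartialSum m ≠ 0 := by
  rw [exp_sub_expPartialSum_eq_X_pow_mul_expTail]
  refine mul_ne_zero (pow_ne_zero _ X_ne_zero) fun h => ?_
  simpa [expTail, Nat.factorial_ne_zero] using congrArg (coeff 0) h

namespace IsGenBernoulli

variable {m : ℕ} {B : ℕ → ℝ → ℝ}

theorem mul_egf (hB : IsGenBernoulli m B) (x : ℝ) :
    (exp ℝ - expPartialSum m) * egf (B · x) = X ^ m * egf (x ^ ·) :=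
  hB x

theorem expTail_mul_egf_zero (hB : IsGenBernoulli m B) : expTail m * egf (B · 0) = 1 := by
  have h := hB.mul_egf 0
  rw [egf_zero_pow, mul_one, exp_sub_expPartialSum_eq_X_pow_mul_expTail, mul_assoc] at h
  exact (mul_eq_left₀ (pow_ne_zero _ X_ne_zero)).mp h

theorem apply_zero_zero (hB : IsGenBernoulli m B) : B 0 0 = m ! := by
  have h := congrArg (coeff 0) hB.expTail_mul_egf_zero
  simp only [coeff_mul, Nat.antidiagonal_zero, sum_singleton, expTail, coeff_mk, coeff_egf,
    coeff_one, if_true, add_zero, Nat.factorial_zero, Nat.cast_one, div_one] at h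
  field_simp at h
  linarith

theorem apply_one_zero (hB : IsGenBernoulli m B) : B 1 0 = -(m ! : ℝ) / (m + 1) := by
  have h := congrArg (coeff 1) hB.expTail_mul_egf_zero
  simp only [coeff_mul, Nat.sum_antidiagonal_eq_sum_range_succ_mk, sum_range_succ,
    sum_range_zero, expTail, coeff_mk, coeff_egf, coeff_one, one_ne_zero, if_false,
    Nat.sub_zero, Nat.sub_self, Nat.add_zero, Nat.factorial_zero, Nat.factorial_one,
    hB.apply_zero_zero, Nat.factorial_succ m] at h
  push_cast at h
  field_simp at h ⊢
  linarith

theorem X_mul_derivative_egf_eq (hB : IsGenBernoulli m B) (hm : 0 < m) (x : ℝ) :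
    X * d⁄dX ℝ (egf (B · x)) =
      C (m : ℝ) * egf (B · x) + (C x - 1) * (X * egf (B · x)) -
        C ((1 : ℝ) / (m - 1)!) * (egf (B · 0) * egf (B · x)) := by
  set G := exp ℝ - expPartialSum m
  set F := egf (B · x)
  set E := egf (x ^ ·)
  have hF : G * F = X ^ m * E := hB.mul_egf x
  have hF0 : G * egf (B · 0) = X ^ m := by simpa [egf_zero_pow] using hB.mul_egf 0
  have hX : (X : ℝ⟦X⟧) ^ m = X ^ (m - 1) * X := by rw [← pow_succ, Nat.sub_add_cancel hm]
  have hderiv := congrArg (d⁄dX ℝ) hF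
  rw [Derivation.leibniz, Derivation.leibniz, Derivation.leibniz_pow, derivative_X,
    derivative_exp_sub_expPartialSum hm, derivative_egf_pow] at hderiv
  simp only [smul_eq_mul, nsmul_eq_mul, ← map_natCast (C (R := ℝ)) m] at hderiv
  refine mul_left_cancel₀ (exp_sub_expPartialSum_ne_zero m) ?_
  linear_combination X * hderiv - (C (m : ℝ) + (C x - 1) * X + X) * hF
    + (C ((1 : ℝ) / (m - 1)!) * F) * hF0
    + (C ((1 : ℝ) / (m - 1)!) * F - C (m : ℝ) * E) * hX

theorem convolution_recurrence (hB : IsGenBernoulli m B) (hm : 0 < m) (x : ℝ) (n : ℕ) :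
    n * B n x = m * B n x + n * (x - 1) * B (n - 1) x -
      1 / (m - 1)! * ∑ k ∈ range (n + 1), (n.choose k : ℝ) * B (n - k) 0 * B k x := by
  have h := congrArg (coeff n) (hB.X_mul_derivative_egf_eq hm x)
  rw [X_mul_derivative_egf, sub_mul, one_mul, X_mul_egf, egf_mul] at h
  simp only [map_sub, map_add, coeff_C_mul, coeff_egf] at h
  have hfac : ((m - 1)! : ℝ) ≠ 0 := by positivity
  field_simp at h ⊢
  linear_combination h

end IsGenBernoulli

theorem stmt_6 (m : ℕ) (hm : 0 < m) (B : ℕ → ℝ → ℝ) (hB : IsGenBernoulli m B)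
    (n : ℕ) (hn : 1 ≤ n) (x : ℝ) :
    B n x = (x - 1 / (m + 1)) * B (n - 1) x -
      (1 / ((n : ℝ) * ((m - 1)! : ℝ))) *
        ∑ k ∈ Finset.range (n - 1), (n.choose k : ℝ) * B (n - k) 0 * B k x := by
  obtain ⟨p, rfl⟩ := Nat.exists_eq_add_of_le' hn
  have h := hB.convolution_recurrence hm x (p + 1)
  rw [sum_range_succ, sum_range_succ, Nat.choose_succ_self_right, Nat.choose_self,
    Nat.add_sub_cancel_left, Nat.sub_self, hB.apply_zero_zero, hB.apply_one_zero,
    ← Nat.mul_factorial_pred hm.ne'] at h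
  rw [Nat.add_sub_cancel]
  have hfac : ((m - 1)! : ℝ) ≠ 0 := by positivity
  push_cast at h ⊢
  field_simp at h ⊢
  linear_combination h
end

section
/- Euler–Maclaurin type formula of level m: let r ≥ 1, m ∈ ℕ, and f ∈ C^r[0,1]. Then ∫_0^1 f(t) dt = (1/m!)[∑_{k=1}^r A_k^{[m-1]}(f) + ((-1)^r/r!) ∫_0^1 f^{(r)}(t) B_r^{[m-1]}(t) dt], where A_k^{[m-1]}(f) = ((-1)^k/k!)(f^{(k-1)}(0) B_k^{[m-1]} - f^{(k-1)}(1) B_k^{[m-1]}(1)). -/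
/-!
The generating function identity forces `B 0 = m!` and makes `(B n)` an Appell sequence:
`B n x = ∑ C(n,k) B k 0 x^(n-k)`, hence `B (n+1)' = (n+1) B n`. As in the classical
Euler–Maclaurin formula, integrating by parts `r` times against `B r / r!` then gives the result.
-/

open scoped Nat Real

theorem hasDerivAt_sum_choose_mul_pow (b : ℕ → ℝ) (n : ℕ) (x : ℝ) :
    HasDerivAt
      (fun y => ∑ k ∈ Finset.range (n + 2), ((n + 1).choose k : ℝ) * b k * y ^ (n + 1 - k))
      ((n + 1) * ∑ k ∈ Finset.range (n + 1), (n.choose k : ℝ) * b k * x ^ (n - k)) x := by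
  refine (HasDerivAt.fun_sum fun k _ => ((hasDerivAt_pow (n + 1 - k) x).const_mul
    (((n + 1).choose k : ℝ) * b k))).congr_deriv ?_
  rw [Finset.sum_range_succ, Nat.sub_self, Nat.cast_zero, zero_mul, mul_zero, add_zero,
    Finset.mul_sum]
  refine Finset.sum_congr rfl fun k hk => ?_
  have hkn : k ≤ n := Nat.lt_succ_iff.1 (Finset.mem_range.1 hk)
  have hchoose : ((n + 1).choose k : ℝ) * ((n + 1 - k : ℕ) : ℝ) = n.choose k * (n + 1) := by
    exact_mod_cast (Nat.choose_mul_succ_eq n k).symm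
  rw [show n + 1 - k - 1 = n - k by omega]
  linear_combination b k * x ^ (n - k) * hchoose

open PowerSeries

theorem exp_sub_expPartialSum (m : ℕ) :
    exp ℝ - expPartialSum m = X ^ m * mk fun n => 1 / ((n + m)! : ℝ) := by
  ext n
  rw [coeff_X_pow_mul', coeff_mk, map_sub, coeff_exp, expPartialSum, map_sum]
  simp only [coeff_C_mul, coeff_X_pow, mul_ite, mul_one, mul_zero, Finset.sum_ite_eq,
    Finset.mem_range]
  split_ifs <;> first | omega | simp [Nat.sub_add_cancel ‹m ≤ n›] | simp

theorem mk_zero_pow_div_factorial : mk (fun n => (0 : ℝ) ^ n / n !) = 1 := by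
  ext (_ | n) <;> simp [coeff_one]

namespace IsGenBernoulli

variable {m : ℕ} {B : ℕ → ℝ → ℝ}

theorem mk_mul_mk (hB : IsGenBernoulli m B) (x : ℝ) :
    (mk fun n => 1 / ((n + m)! : ℝ)) * mk (fun n => B n x / n !) = mk fun n => x ^ n / n ! :=
  X_pow_mul_cancel <| by rw [← mul_assoc, ← exp_sub_expPartialSum, hB x]

theorem apply_zero (hB : IsGenBernoulli m B) (x : ℝ) : B 0 x = m ! := by
  have h := congrArg (coeff 0) (hB.mk_mul_mk x)
  simp only [coeff_mul, Finset.Nat.antidiagonal_zero, Finset.sum_singleton, coeff_mk,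
    zero_add, pow_zero, Nat.factorial_zero, Nat.cast_one, div_one] at h
  field_simp at h
  linarith

theorem mk_eq_mk_mul_mk (hB : IsGenBernoulli m B) (x : ℝ) :
    mk (fun n => B n x / n !) = mk (fun n => B n 0 / n !) * mk fun n => x ^ n / n ! := by
  have hE : (mk fun n => 1 / ((n + m)! : ℝ)) ≠ 0 := fun h => by
    simpa [Nat.factorial_ne_zero] using congrArg (coeff 0) h
  refine mul_left_cancel₀ hE ?_
  rw [hB.mk_mul_mk, ← mul_assoc, hB.mk_mul_mk, mk_zero_pow_div_factorial, one_mul]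

theorem eq_sum_choose (hB : IsGenBernoulli m B) (n : ℕ) (x : ℝ) :
    B n x = ∑ k ∈ Finset.range (n + 1), (n.choose k : ℝ) * B k 0 * x ^ (n - k) := by
  have h := congrArg (coeff n) (hB.mk_eq_mk_mul_mk x)
  rw [coeff_mk, coeff_mul, Finset.Nat.sum_antidiagonal_eq_sum_range_succ_mk] at h
  simp only [coeff_mk] at h
  rw [div_eq_iff (by positivity)] at h
  rw [h, Finset.sum_mul]
  refine Finset.sum_congr rfl fun k hk => ?_
  rw [Nat.cast_choose ℝ (Nat.lt_succ_iff.1 (Finset.mem_range.1 hk))]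
  field_simp

theorem hasDerivAt (hB : IsGenBernoulli m B) (n : ℕ) (x : ℝ) :
    HasDerivAt (B (n + 1)) ((n + 1) * B n x) x := by
  rw [funext (hB.eq_sum_choose (n + 1)), hB.eq_sum_choose n]
  exact hasDerivAt_sum_choose_mul_pow _ n x

end IsGenBernoulli

section EulerMaclaurin

open Set

variable {P : ℕ → ℝ → ℝ} {a b : ℝ} {f : ℝ → ℝ}

theorem integral_iteratedDerivWithin_mul_eq
    {r : ℕ} (hP : ∀ x, HasDerivAt (P (r + 1)) ((r + 1) * P r x) x) (hPr : Continuous (P r))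
    (hab : a < b) (hf : ContDiffOn ℝ (r + 1) f (Icc a b)) :
    ∫ t in a..b, iteratedDerivWithin r f (Icc a b) t * P r t =
      (iteratedDerivWithin r f (Icc a b) b * P (r + 1) b -
        iteratedDerivWithin r f (Icc a b) a * P (r + 1) a -
        ∫ t in a..b, iteratedDerivWithin (r + 1) f (Icc a b) t * P (r + 1) t) / (r + 1) := by
  have hIcc : uIcc a b = Icc a b := uIcc_of_le hab.le
  have hUD : UniqueDiffOn ℝ (Icc a b) := uniqueDiffOn_Icc hab
  have hu : ∀ x ∈ uIcc a b, HasDerivWithinAt (iteratedDerivWithin r f (Icc a b))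
      (iteratedDerivWithin (r + 1) f (Icc a b) x) (uIcc a b) x := by
    rw [hIcc, iteratedDerivWithin_succ]
    exact fun x hx => (hf.differentiableOn_iteratedDerivWithin (by norm_cast; omega) hUD x hx)
      |>.hasDerivWithinAt
  have hv : ∀ x ∈ uIcc a b,
      HasDerivWithinAt (fun t => P (r + 1) t / (r + 1)) (P r x) (uIcc a b) x :=
    fun x _ => by
      simpa only [mul_div_cancel_left₀ (P r x) (Nat.cast_add_one_ne_zero r : (r : ℝ) + 1 ≠ 0)]
        using ((hP x).div_const ((r : ℝ) + 1)).hasDerivWithinAt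
  have hu' : IntervalIntegrable (iteratedDerivWithin (r + 1) f (Icc a b)) MeasureTheory.volume
      a b :=
    (hf.continuousOn_iteratedDerivWithin le_rfl hUD).intervalIntegrable_of_Icc hab.le
  rw [intervalIntegral.integral_mul_deriv_eq_deriv_mul_of_hasDerivWithinAt hu hv hu'
    (hPr.intervalIntegrable a b)]
  simp only [← mul_div_assoc, intervalIntegral.integral_div]
  ring

theorem mul_integral_eq_sum_add_integral_iteratedDerivWithin {c : ℝ} (hP0 : ∀ x, P 0 x = c)
    (hP : ∀ n x, HasDerivAt (P (n + 1)) ((n + 1) * P n x) x) (hab : a < b) (r : ℕ)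
    (hf : ContDiffOn ℝ r f (Icc a b)) :
    c * ∫ t in a..b, f t =
      ∑ k ∈ Finset.Icc 1 r, ((-1 : ℝ) ^ k / k !) *
          (iteratedDerivWithin (k - 1) f (Icc a b) a * P k a -
            iteratedDerivWithin (k - 1) f (Icc a b) b * P k b) +
        ((-1 : ℝ) ^ r / r !) * ∫ t in a..b, iteratedDerivWithin r f (Icc a b) t * P r t := by
  induction r with
  | zero => simp [hP0, mul_comm c]
  | succ r ih =>
    have hPr : Continuous (P r) := by
      cases r with
      | zero => simpa [funext hP0] using continuous_const
      | succ n => exact continuous_iff_continuousAt.2 fun x => (hP n x).continuousAt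
    rw [ih (hf.of_le (by norm_cast; omega)), Finset.sum_Icc_succ_top (by omega),
      integral_iteratedDerivWithin_mul_eq (hP r) hPr hab hf, Nat.add_sub_cancel, Nat.factorial_succ]
    push_cast
    field_simp
    ring

end EulerMaclaurin

theorem stmt_15_general (m : ℕ) (B : ℕ → ℝ → ℝ) (hB : IsGenBernoulli m B)
    (r : ℕ) (f : ℝ → ℝ) (hf : ContDiffOn ℝ r f (Set.Icc 0 1)) :
    ∫ t in (0 : ℝ)..1, f t =
      (1 / (m ! : ℝ)) *
        ((∑ k ∈ Finset.Icc 1 r, ((-1 : ℝ) ^ k / (k ! : ℝ)) *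
            (iteratedDerivWithin (k - 1) f (Set.Icc 0 1) 0 * B k 0 -
              iteratedDerivWithin (k - 1) f (Set.Icc 0 1) 1 * B k 1)) +
          ((-1 : ℝ) ^ r / (r ! : ℝ)) *
            ∫ t in (0 : ℝ)..1, iteratedDerivWithin r f (Set.Icc 0 1) t * B r t) := by
  rw [← mul_integral_eq_sum_add_integral_iteratedDerivWithin hB.apply_zero hB.hasDerivAt
    zero_lt_one r hf, one_div, inv_mul_cancel_left₀ (by positivity)]

theorem stmt_15 (m : ℕ) (hm : 0 < m) (B : ℕ → ℝ → ℝ) (hB : IsGenBernoulli m B)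
    (r : ℕ) (hr : 1 ≤ r) (f : ℝ → ℝ) (hf : ContDiffOn ℝ r f (Set.Icc 0 1)) :
    ∫ t in (0 : ℝ)..1, f t =
      (1 / (m ! : ℝ)) *
        ((∑ k ∈ Finset.Icc 1 r, ((-1 : ℝ) ^ k / (k ! : ℝ)) *
            (iteratedDerivWithin (k - 1) f (Set.Icc 0 1) 0 * B k 0 -
              iteratedDerivWithin (k - 1) f (Set.Icc 0 1) 1 * B k 1)) +
          ((-1 : ℝ) ^ r / (r ! : ℝ)) *
            ∫ t in (0 : ℝ)..1, iteratedDerivWithin r f (Set.Icc 0 1) t * B r t) :=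
  stmt_15_general m B hB r f hf
end
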